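/- Let G be the circulant graph Cay(Z_18, S) with connection set S = {1, 2, 4, 6, 7, 8, 10, 11, 12, 14, 16, 17}. Then G is 12-regular, G is type I, and its equitable total chromatic number equals Δ(G) + 1: χ''_=(G) = χ''(G) = 13. -/

import Mathlib

open SimpleGraph

/-- A total coloring of `G` with `t` colors: a vertex coloring `cv` and an edge coloring `ce`
such that adjacent vertices get distinct colors, distinct edges sharing an endpoint get
distinct colors, and every edge gets a color distinct from those of its endpoints. -/
def IsTotalColoring {V : Type*} (G : SimpleGraph V) {t : ℕ}
    (cv : V → Fin t) (ce : Sym2 V → Fin t) : Prop :=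
  (∀ u v : V, G.Adj u v → cv u ≠ cv v) ∧
  (∀ e₁ ∈ G.edgeSet, ∀ e₂ ∈ G.edgeSet, e₁ ≠ e₂ → (∃ u : V, u ∈ e₁ ∧ u ∈ e₂) →
    ce e₁ ≠ ce e₂) ∧
  (∀ e ∈ G.edgeSet, ∀ u : V, u ∈ e → ce e ≠ cv u)

/-- The total chromatic number of `G`. -/
noncomputable def totalChromaticNumber {V : Type*} (G : SimpleGraph V) : ℕ :=
  sInf {t : ℕ | ∃ cv : V → Fin t, ∃ ce : Sym2 V → Fin t, IsTotalColoring G cv ce}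

/-- The size of the color class of color `c`: vertices plus edges colored `c`. -/
noncomputable def totalClassSize {V : Type*} (G : SimpleGraph V) {t : ℕ}
    (cv : V → Fin t) (ce : Sym2 V → Fin t) (c : Fin t) : ℕ :=
  {v : V | cv v = c}.ncard + {e : Sym2 V | e ∈ G.edgeSet ∧ ce e = c}.ncard

/-- An equitable total coloring: a total coloring whose color class sizes pairwise differ
by at most one. -/
def IsEquitableTotalColoring {V : Type*} (G : SimpleGraph V) {t : ℕ}
    (cv : V → Fin t) (ce : Sym2 V → Fin t) : Prop :=
  IsTotalColoring G cv ce ∧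
  ∀ c c' : Fin t, totalClassSize G cv ce c ≤ totalClassSize G cv ce c' + 1

/-- The equitable total chromatic number of `G`. -/
noncomputable def equitableTotalChromaticNumber {V : Type*} (G : SimpleGraph V) : ℕ :=
  sInf {t : ℕ | ∃ cv : V → Fin t, ∃ ce : Sym2 V → Fin t, IsEquitableTotalColoring G cv ce}

/-- The color sum at a vertex `u`: the color of `u` plus the colors of all edges incident
with `u`, where color `c : Fin t` represents the integer color `c + 1 ∈ {1, …, t}`. -/
noncomputable def nsdSum {V : Type*} (G : SimpleGraph V) {t : ℕ}
    (cv : V → Fin t) (ce : Sym2 V → Fin t) (u : V) : ℕ :=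
  ((cv u : ℕ) + 1) + ∑ᶠ e ∈ G.incidenceSet u, ((ce e : ℕ) + 1)

/-- A neighborhood sum distinguishing total coloring: a total coloring such that adjacent
vertices have distinct color sums. -/
def IsNSDTotalColoring {V : Type*} (G : SimpleGraph V) {t : ℕ}
    (cv : V → Fin t) (ce : Sym2 V → Fin t) : Prop :=
  IsTotalColoring G cv ce ∧
  ∀ u v : V, G.Adj u v → nsdSum G cv ce u ≠ nsdSum G cv ce v

/-- The neighborhood sum distinguishing total chromatic number of `G`. -/
noncomputable def nsdTotalChromaticNumber {V : Type*} (G : SimpleGraph V) : ℕ :=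
  sInf {t : ℕ | ∃ cv : V → Fin t, ∃ ce : Sym2 V → Fin t, IsNSDTotalColoring G cv ce}

/-- The power of cycle `C_n^k`: vertices `ZMod n`, with `x ~ y` iff `x - y ≡ ±j (mod n)`
for some `1 ≤ j ≤ k`. -/
def powerOfCycle (n k : ℕ) : SimpleGraph (ZMod n) :=
  SimpleGraph.fromRel (fun x y => ∃ j : ℕ, 1 ≤ j ∧ j ≤ k ∧ x - y = (j : ZMod n))

/-- The circulant graph `Cay(ZMod n, S)`: `x ~ y` iff `x - y ∈ S` (symmetrized). -/
def cayley (n : ℕ) (S : Finset (ZMod n)) : SimpleGraph (ZMod n) :=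
  SimpleGraph.fromRel (fun x y => x - y ∈ S)

instance cayley.instDecidableRelAdj (n : ℕ) (S : Finset (ZMod n)) :
    DecidableRel (cayley n S).Adj :=
  fun x y => inferInstanceAs (Decidable (x ≠ y ∧ (x - y ∈ S ∨ y - x ∈ S)))


/-! Read `ZMod 18` as `ZMod 2 × ZMod 9`. The connection set is then all `(0, b)` with `b ≠ 0`
together with `(1, ±1)` and `(1, ±2)`, so the graph is two copies of `K₉` (the even and the odd
vertices) joined by a 4-regular bipartite graph. Each `K₉` gets the classical total coloring of
a complete graph of odd order: vertex `b` gets `2b` and edge `bb'` gets `b + b'` in `ZMod 9`. A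
cross edge gets one of four new colors according to its offset from its even to its odd
endpoint. These 13 = Δ + 1 color classes consist of 2 vertices and 8 edges (nine of them) or
of a perfect matching of 9 edges (the other four), and no total coloring can do with fewer
colors, since a vertex and its 12 edges need distinct colors. -/

open Finset

section Cayley

variable {n : ℕ} {S : Finset (ZMod n)}

theorem cayley_adj_iff (hS₀ : 0 ∉ S) (hS : ∀ s ∈ S, -s ∈ S) {x y : ZMod n} :
    (cayley n S).Adj x y ↔ y - x ∈ S := by
  rw [cayley, fromRel_adj]
  refine ⟨?_, fun h => ⟨fun hxy => hS₀ (by simpa [hxy] using h), .inr h⟩⟩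
  rintro ⟨-, h | h⟩
  · simpa using hS _ h
  · exact h

theorem cayley_neighborFinset [NeZero n] (hS₀ : 0 ∉ S) (hS : ∀ s ∈ S, -s ∈ S) (x : ZMod n) :
    (cayley n S).neighborFinset x = S.map (addLeftEmbedding x) := by
  ext y
  simp only [mem_neighborFinset, cayley_adj_iff hS₀ hS, mem_map, addLeftEmbedding_apply]
  exact ⟨fun h => ⟨_, h, add_sub_cancel x y⟩, by rintro ⟨a, ha, rfl⟩; simpa using ha⟩

theorem cayley_isRegularOfDegree [NeZero n] (hS₀ : 0 ∉ S) (hS : ∀ s ∈ S, -s ∈ S) :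
    (cayley n S).IsRegularOfDegree #S := fun x => by
  rw [← card_neighborFinset_eq_degree, cayley_neighborFinset hS₀ hS, card_map]

end Cayley

section TotalColoring

variable {V : Type*} {G : SimpleGraph V}

theorem isTotalColoring_of_adj {t : ℕ} {cv : V → Fin t} {ce : Sym2 V → Fin t}
    (hv : ∀ u v, G.Adj u v → cv u ≠ cv v)
    (he : ∀ u v w, G.Adj u v → G.Adj u w → v ≠ w → ce s(u, v) ≠ ce s(u, w))
    (hve : ∀ u v, G.Adj u v → ce s(u, v) ≠ cv u) :
    IsTotalColoring G cv ce := by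
  refine ⟨hv, ?_, ?_⟩
  · rintro e₁ he₁ e₂ he₂ hne ⟨u, hu₁, hu₂⟩
    obtain ⟨v, rfl⟩ := Sym2.mem_iff_exists.mp hu₁
    obtain ⟨w, rfl⟩ := Sym2.mem_iff_exists.mp hu₂
    exact he u v w he₁ he₂ fun hvw => hne (hvw ▸ rfl)
  · rintro e he' u hu
    obtain ⟨v, rfl⟩ := Sym2.mem_iff_exists.mp hu
    exact hve u v he'

theorem IsTotalColoring.degree_lt {t : ℕ} {cv : V → Fin t} {ce : Sym2 V → Fin t}
    (h : IsTotalColoring G cv ce) (v : V) [Fintype (G.neighborSet v)] : G.degree v < t := by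
  let f : Option (G.neighborSet v) → Fin t := fun o => o.elim (cv v) fun w => ce s(v, w)
  have hf : Function.Injective f := by
    rintro (_ | ⟨w, hw⟩) (_ | ⟨w', hw'⟩) hww'
    · rfl
    · exact absurd hww'.symm (h.2.2 _ hw' v (Sym2.mem_mk_left _ _))
    · exact absurd hww' (h.2.2 _ hw v (Sym2.mem_mk_left _ _))
    · by_contra hne
      refine h.2.1 _ hw _ hw' (fun he => ?_) ⟨v, Sym2.mem_mk_left _ _, Sym2.mem_mk_left _ _⟩ hww'
      exact hne (congrArg some (Subtype.ext (Sym2.congr_right.mp he)))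
  have hcard := Fintype.card_le_of_injective f hf
  rwa [Fintype.card_option, card_neighborSet_eq_degree, Fintype.card_fin, Nat.succ_le_iff] at hcard

theorem totalChromaticNumber_eq_of_isTotalColoring {d : ℕ} {cv : V → Fin (d + 1)}
    {ce : Sym2 V → Fin (d + 1)} (h : IsTotalColoring G cv ce) (v : V) [Fintype (G.neighborSet v)]
    (hv : G.degree v = d) : totalChromaticNumber G = d + 1 :=
  IsLeast.csInf_eq ⟨⟨cv, ce, h⟩, fun _ ⟨_, _, h'⟩ => hv ▸ h'.degree_lt v⟩

theorem equitableTotalChromaticNumber_eq_of_isEquitableTotalColoring {d : ℕ}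
    {cv : V → Fin (d + 1)} {ce : Sym2 V → Fin (d + 1)} (h : IsEquitableTotalColoring G cv ce)
    (v : V) [Fintype (G.neighborSet v)] (hv : G.degree v = d) :
    equitableTotalChromaticNumber G = d + 1 :=
  IsLeast.csInf_eq ⟨⟨cv, ce, h⟩, fun _ ⟨_, _, h'⟩ => hv ▸ h'.1.degree_lt v⟩

theorem totalClassSize_eq_card [Fintype V] [DecidableEq V] [DecidableRel G.Adj] {t : ℕ}
    (cv : V → Fin t) (ce : Sym2 V → Fin t) (c : Fin t) :
    totalClassSize G cv ce c = #{v | cv v = c} + #{e ∈ G.edgeFinset | ce e = c} := by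
  simp only [totalClassSize, Set.ncard_eq_toFinset_card', Set.toFinset_ofPred, ← mem_edgeFinset,
    filter_and, filter_mem_eq_inter, univ_inter, inter_filter, inter_univ]

end TotalColoring

namespace Circulant18

abbrev connectionSet : Finset (ZMod 18) := {1, 2, 4, 6, 7, 8, 10, 11, 12, 14, 16, 17}

def vertexColor (x : ZMod 18) : Fin 13 := ⟨2 * x.val % 9, by omega⟩

/-- The offsets `y - x` of cross edges from their even endpoint `x` are `1, 7, 11, 17`, which
division by 5 numbers `0, 1, 2, 3`. -/
def edgeColorOf (x y : ZMod 18) : Fin 13 :=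
  if x.val % 2 = y.val % 2 then ⟨(x.val + y.val) % 9, by omega⟩
  else if x.val % 2 = 0 then ⟨9 + (y - x).val / 5, by have := (y - x).val_lt; omega⟩
  else ⟨9 + (x - y).val / 5, by have := (x - y).val_lt; omega⟩

theorem edgeColorOf_comm (x y : ZMod 18) : edgeColorOf x y = edgeColorOf y x := by
  unfold edgeColorOf
  split_ifs <;> first | omega | simp only [Nat.add_comm]

def edgeColor : Sym2 (ZMod 18) → Fin 13 := Sym2.lift ⟨edgeColorOf, edgeColorOf_comm⟩

theorem vertexColor_ne_of_adj :
    ∀ x y, (cayley 18 connectionSet).Adj x y → vertexColor x ≠ vertexColor y := by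
  decide

theorem edgeColorOf_ne_of_adj : ∀ u v w, (cayley 18 connectionSet).Adj u v →
    (cayley 18 connectionSet).Adj u w → v ≠ w → edgeColorOf u v ≠ edgeColorOf u w := by
  decide

theorem edgeColorOf_ne_vertexColor :
    ∀ x y, (cayley 18 connectionSet).Adj x y → edgeColorOf x y ≠ vertexColor x := by
  decide

theorem isTotalColoring : IsTotalColoring (cayley 18 connectionSet) vertexColor edgeColor :=
  isTotalColoring_of_adj vertexColor_ne_of_adj edgeColorOf_ne_of_adj edgeColorOf_ne_vertexColor

theorem totalClassSize_eq (c : Fin 13) :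
    totalClassSize (cayley 18 connectionSet) vertexColor edgeColor c = if c < 9 then 10 else 9 := by
  rw [totalClassSize_eq_card]
  revert c
  decide

theorem isEquitableTotalColoring :
    IsEquitableTotalColoring (cayley 18 connectionSet) vertexColor edgeColor :=
  ⟨isTotalColoring, fun c c' => by rw [totalClassSize_eq, totalClassSize_eq]; split_ifs <;> omega⟩

theorem isRegularOfDegree : (cayley 18 connectionSet).IsRegularOfDegree 12 :=
  cayley_isRegularOfDegree (by decide) (by decide)

end Circulant18

/-- Example 3.4: the circulant graph on `ZMod 18` with connection set
`{1,2,4,6,7,8,10,11,12,14,16,17}` is 12-regular, type I, and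
`χ''_=(G) = χ''(G) = 13 = Δ + 1`. -/
theorem circulant_18_example (S : Finset (ZMod 18))
    (hS : S = {1, 2, 4, 6, 7, 8, 10, 11, 12, 14, 16, 17}) :
    (cayley 18 S).IsRegularOfDegree 12 ∧
    totalChromaticNumber (cayley 18 S) = 13 ∧
    equitableTotalChromaticNumber (cayley 18 S) = 13 := by
  subst hS
  open Circulant18 in
  exact ⟨isRegularOfDegree,
    totalChromaticNumber_eq_of_isTotalColoring isTotalColoring 0 (isRegularOfDegree 0),
    equitableTotalChromaticNumber_eq_of_isEquitableTotalColoring isEquitableTotalColoring 0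
      (isRegularOfDegree 0)⟩
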